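/- arXiv:1507.00793 — 3 statements merged into one kernel-verified Lean document; each statement's English description precedes it below -/
import Mathlib

section
/- Battle's first biorthogonality identity: Let g, h ∈ L²(ℝ) be such that t ↦ t·g(t) and t ↦ t·h(t) belong to L²(ℝ), and suppose ⟨g, π(k,l)h⟩ = 1 if (k,l) = (0,0) and 0 otherwise, for all k, l ∈ ℤ. Then for all k, l ∈ ℤ one has ⟨∇₁g, π(k,l)h⟩ = −⟨π(−k,−l)g, ∇₁h⟩, where (∇₁u)(t) = 2πi t u(t). -/
/-! The substitution `t ↦ t - k` turns the integrand of `⟨π(-k,-l)g, ∇₁h⟩` into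
`e^{2πilk} (2πik · g · conj(π(k,l)h) - ∇₁g · conj(π(k,l)h))`, because `t - (t - k) = k`.
For integers the phase is `1`, and `k ⟨g, π(k,l)h⟩ = 0` by biorthogonality, so the two inner
products cancel. -/

open MeasureTheory Complex

noncomputable section

/-- The time–frequency shift `π(x,ω)`: `(π(x,ω)g)(t) = e^{2πiωt} g(t-x)`. -/
def tfShift (x ω : ℝ) (g : ℝ → ℂ) : ℝ → ℂ :=
  fun t => Complex.exp (2 * Real.pi * Complex.I * ω * t) * g (t - x)

/-- The `L²` inner product `⟨f,g⟩ = ∫ f(t) conj (g(t)) dt`, linear in the first argument. -/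
def L2inner (f g : ℝ → ℂ) : ℂ := ∫ t : ℝ, f t * (starRingEnd ℂ) (g t)

/-- The covariant derivative `(∇₁u)(t) = 2πi t u(t)` (the case `θ = 1`). -/
def nabla₁ (u : ℝ → ℂ) : ℝ → ℂ :=
  fun t => 2 * Real.pi * Complex.I * (t : ℂ) * u t

lemma integrable_mul_conj_of_memLp_two {α : Type*} [MeasurableSpace α] {μ : Measure α}
    {f g : α → ℂ} (hf : MemLp f 2 μ) (hg : MemLp g 2 μ) :
    Integrable (fun t => f t * starRingEnd ℂ (g t)) μ :=
  hf.integrable_mul (q := 2) hg.star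

lemma norm_tfShift (x ω : ℝ) (h : ℝ → ℂ) (t : ℝ) : ‖tfShift x ω h t‖ = ‖h (t - x)‖ := by
  rw [tfShift, norm_mul, show (2 * Real.pi * Complex.I * ω * t : ℂ) =
    ((2 * Real.pi * ω * t : ℝ) : ℂ) * Complex.I by push_cast; ring,
    Complex.norm_exp_ofReal_mul_I, one_mul]

lemma memLp_tfShift {p : ENNReal} (x ω : ℝ) {h : ℝ → ℂ} (hh : MemLp h p volume) :
    MemLp (tfShift x ω h) p volume := by
  have hshift : MemLp (fun t => h (t - x)) p volume :=
    hh.comp_measurePreserving (measurePreserving_sub_right volume x)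
  refine hshift.of_le ?_ (Filter.Eventually.of_forall fun t => (norm_tfShift x ω h t).le)
  exact (by fun_prop : Continuous fun t : ℝ => Complex.exp (2 * Real.pi * Complex.I * ω * t))
    |>.aestronglyMeasurable.mul hshift.1

lemma memLp_nabla₁ {p : ENNReal} {g : ℝ → ℂ} (htg : MemLp (fun t : ℝ => (t : ℂ) * g t) p volume) :
    MemLp (nabla₁ g) p volume := by
  have hnabla : nabla₁ g = fun t : ℝ => 2 * Real.pi * Complex.I * ((t : ℂ) * g t) :=
    funext fun t => mul_assoc _ _ _
  exact hnabla ▸ htg.const_mul _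

lemma tfShift_neg_mul_conj_nabla₁_sub (x ω t : ℝ) (g h : ℝ → ℂ) :
    tfShift (-x) (-ω) g (t - x) * starRingEnd ℂ (nabla₁ h (t - x)) =
      Complex.exp (2 * Real.pi * Complex.I * ω * x) *
        (2 * Real.pi * Complex.I * x * (g t * starRingEnd ℂ (tfShift x ω h t)) -
          nabla₁ g t * starRingEnd ℂ (tfShift x ω h t)) := by
  simp only [tfShift, nabla₁, sub_neg_eq_add, sub_add_cancel, map_mul, map_ofNat, conj_I,
    conj_ofReal, ← Complex.exp_conj]
  have hexp : Complex.exp (2 * Real.pi * Complex.I * ((-ω : ℝ) : ℂ) * ((t - x : ℝ) : ℂ)) =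
      Complex.exp (2 * Real.pi * Complex.I * ω * x) *
        Complex.exp (2 * Real.pi * -Complex.I * ω * t) := by
    rw [← Complex.exp_add]; congr 1; push_cast; ring
  rw [hexp]
  push_cast
  ring

lemma L2inner_tfShift_neg_nabla₁ (x ω : ℝ) {g h : ℝ → ℂ} (hg : MemLp g 2 volume)
    (hh : MemLp h 2 volume) (htg : MemLp (fun t : ℝ => (t : ℂ) * g t) 2 volume) :
    L2inner (tfShift (-x) (-ω) g) (nabla₁ h) =
      Complex.exp (2 * Real.pi * Complex.I * ω * x) *
        (2 * Real.pi * Complex.I * x * L2inner g (tfShift x ω h) -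
          L2inner (nabla₁ g) (tfShift x ω h)) := by
  have hS := memLp_tfShift x ω hh
  have hgS := integrable_mul_conj_of_memLp_two hg hS
  have hngS := integrable_mul_conj_of_memLp_two (memLp_nabla₁ htg) hS
  rw [L2inner, ← integral_sub_right_eq_self _ x]
  simp only [tfShift_neg_mul_conj_nabla₁_sub]
  rw [integral_const_mul, integral_sub (hgS.const_mul _) hngS, integral_const_mul]
  rfl

theorem battle_first_identity_general (g h : ℝ → ℂ)
    (hg : MemLp g 2 (volume : Measure ℝ)) (hh : MemLp h 2 (volume : Measure ℝ))
    (htg : MemLp (fun t : ℝ => (t : ℂ) * g t) 2 (volume : Measure ℝ))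
    (hbiorth : ∀ k l : ℤ, L2inner g (tfShift k l h) = if k = 0 ∧ l = 0 then 1 else 0) :
    ∀ k l : ℤ,
      L2inner (nabla₁ g) (tfShift k l h) = -L2inner (tfShift (-k) (-l) g) (nabla₁ h) := by
  intro k l
  have hphase : Complex.exp (2 * Real.pi * Complex.I * (l : ℝ) * (k : ℝ)) = 1 := by
    simpa [mul_comm, mul_left_comm, mul_assoc] using Complex.exp_int_mul_two_pi_mul_I (l * k)
  have hdiag : (k : ℂ) * L2inner g (tfShift k l h) = 0 := by
    rw [hbiorth]
    split_ifs with hkl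
    · simp [hkl.1]
    · simp
  rw [L2inner_tfShift_neg_nabla₁ _ _ hg hh htg, hphase]
  linear_combination (2 * Real.pi * Complex.I) * hdiag

/-- **Battle's first biorthogonality identity.** If `t·g(t)` and `t·h(t)` are in `L²` and
`⟨g, π(k,l)h⟩ = δ_{(k,l),(0,0)}`, then `⟨∇₁g, π(k,l)h⟩ = −⟨π(−k,−l)g, ∇₁h⟩`. -/
theorem battle_first_identity (g h : ℝ → ℂ)
    (hg : MemLp g 2 (volume : Measure ℝ)) (hh : MemLp h 2 (volume : Measure ℝ))
    (htg : MemLp (fun t : ℝ => (t : ℂ) * g t) 2 (volume : Measure ℝ))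
    (hth : MemLp (fun t : ℝ => (t : ℂ) * h t) 2 (volume : Measure ℝ))
    (hbiorth : ∀ k l : ℤ, L2inner g (tfShift k l h) = if k = 0 ∧ l = 0 then 1 else 0) :
    ∀ k l : ℤ,
      L2inner (nabla₁ g) (tfShift k l h) = -L2inner (tfShift (-k) (-l) g) (nabla₁ h) :=
  battle_first_identity_general g h hg hh htg hbiorth
end
end

section
/- Rapid decay of Gabor coefficients of Schwartz functions: Let θ > 0 and f, g ∈ 𝒮(ℝ). Then for every N ∈ ℕ there exists a constant C > 0 such that |⟨f, π(θk, l)g⟩| ≤ C (1 + |k| + |l|)^{−N} for all k, l ∈ ℤ; that is, the double sequence (k,l) ↦ ⟨f, π(θk,l)g⟩ is rapidly decreasing on ℤ². -/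
open MeasureTheory Complex

noncomputable section

/-!
The Gabor coefficient `⟨f, π(x, ω) g⟩` is the Fourier transform at `ω` of the product
`h_x = f · conj (g (· - x))`. By Peetre's inequality `1 + |x| ≤ (1 + |t|)(1 + |t - x|)` and the
Leibniz rule, every derivative of `h_x` is bounded by `C (1 + |x|)^{-N} (1 + t²)^{-1}`, so the
`L¹` norms of `h_x` and of `h_x^{(N)}` decay like `(1 + |x|)^{-N}`. Integrating by parts `N` times
turns this into the bound `(1 + |x|)^N (1 + |ω|)^N |𝓕 h_x(ω)| ≤ D`, and on the lattice
`x = θk, ω = l` the weight `(1 + |x|)(1 + |ω|)` dominates `1 + |k| + |l|` up to a factor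
`max 1 θ⁻¹`.
-/

open Real FourierTransform
open scoped ComplexConjugate

section Leibniz

variable {𝕜 E A : Type*} [NontriviallyNormedField 𝕜] [NormedAddCommGroup E] [NormedSpace 𝕜 E]
  [NormedRing A] [NormedAlgebra 𝕜 A]

theorem mul_mul_norm_iteratedFDeriv_mul_le {u v : E → A} {n : ℕ} (hu : ContDiff 𝕜 n u)
    (hv : ContDiff 𝕜 n v) {x : E} {a b U V : ℝ} (ha : 0 ≤ a) (hb : 0 ≤ b)
    (hU : ∀ i ≤ n, a * ‖iteratedFDeriv 𝕜 i u x‖ ≤ U)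
    (hV : ∀ i ≤ n, b * ‖iteratedFDeriv 𝕜 i v x‖ ≤ V) :
    a * b * ‖iteratedFDeriv 𝕜 n (fun y => u y * v y) x‖ ≤ 2 ^ n * (U * V) := by
  have hU0 : 0 ≤ U := (by positivity : 0 ≤ a * ‖iteratedFDeriv 𝕜 0 u x‖).trans (hU 0 n.zero_le)
  calc a * b * ‖iteratedFDeriv 𝕜 n (fun y => u y * v y) x‖
      ≤ a * b * ∑ i ∈ Finset.range (n + 1), (n.choose i : ℝ) *
          ‖iteratedFDeriv 𝕜 i u x‖ * ‖iteratedFDeriv 𝕜 (n - i) v x‖ := by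
        gcongr; exact norm_iteratedFDeriv_mul_le hu hv x le_rfl
    _ = ∑ i ∈ Finset.range (n + 1), (n.choose i : ℝ) *
          ((a * ‖iteratedFDeriv 𝕜 i u x‖) * (b * ‖iteratedFDeriv 𝕜 (n - i) v x‖)) := by
        rw [Finset.mul_sum]; exact Finset.sum_congr rfl fun _ _ => by ring
    _ ≤ ∑ i ∈ Finset.range (n + 1), (n.choose i : ℝ) * (U * V) := by
        gcongr with i hi
        · exact hU i (Nat.lt_succ_iff.mp (Finset.mem_range.mp hi))
        · exact hV _ (n.sub_le i)
    _ = 2 ^ n * (U * V) := by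
        rw [← Finset.sum_mul, ← Nat.cast_sum, n.sum_range_choose, Nat.cast_pow, Nat.cast_ofNat]

end Leibniz

theorem norm_iteratedFDeriv_conj_comp_sub {E : Type*} [NormedAddCommGroup E] [NormedSpace ℝ E]
    (g : E → ℂ) (x : E) (i : ℕ) (t : E) :
    ‖iteratedFDeriv ℝ i (fun s => conj (g (s - x))) t‖ = ‖iteratedFDeriv ℝ i g (t - x)‖ := by
  rw [show (fun s => conj (g (s - x))) = RCLike.conjLIE (K := ℂ) ∘ fun s => g (s - x) from rfl,
    LinearIsometryEquiv.norm_iteratedFDeriv_comp_left, iteratedFDeriv_comp_sub]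

theorem ContDiff.conj_comp_sub {E : Type*} [NormedAddCommGroup E] [NormedSpace ℝ E] {g : E → ℂ}
    {n : WithTop ℕ∞} (hg : ContDiff ℝ n g) (x : E) : ContDiff ℝ n (fun s => conj (g (s - x))) :=
  conjCLE.contDiff.comp (hg.comp (contDiff_id.sub contDiff_const))

theorem one_add_abs_le_mul_one_add_abs_sub (x t : ℝ) : 1 + |x| ≤ (1 + |t|) * (1 + |t - x|) := by
  have : |x| ≤ |t| + |t - x| := by simpa using abs_sub t (t - x)
  nlinarith [abs_nonneg t, abs_nonneg (t - x)]

theorem one_add_sq_le_one_add_abs_sq (t : ℝ) : 1 + t ^ 2 ≤ (1 + |t|) ^ 2 := by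
  nlinarith [sq_abs t, abs_nonneg t]

theorem one_add_abs_add_abs_le_max_mul (θ : ℝ) (hθ : 0 < θ) (k l : ℝ) :
    1 + |k| + |l| ≤ max 1 θ⁻¹ * ((1 + |θ * k|) * (1 + |l|)) := by
  have hk : 1 + |k| ≤ max 1 θ⁻¹ * (1 + |θ * k|) := by
    rw [abs_mul, abs_of_pos hθ, mul_add, mul_one, ← mul_assoc]
    have : 1 ≤ max 1 θ⁻¹ * θ := by
      rw [← inv_mul_cancel₀ hθ.ne']; gcongr; exact le_max_right _ _
    nlinarith [le_max_left 1 θ⁻¹, abs_nonneg k]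
  calc 1 + |k| + |l| ≤ (1 + |k|) * (1 + |l|) := by nlinarith [abs_nonneg k, abs_nonneg l]
    _ ≤ max 1 θ⁻¹ * (1 + |θ * k|) * (1 + |l|) := by gcongr
    _ = _ := by ring

section Integrals

variable {E : Type*} [NormedAddCommGroup E]

theorem integrable_of_one_add_sq_mul_norm_le {φ : ℝ → E} (hφ : AEStronglyMeasurable φ) {c : ℝ}
    (h : ∀ t, (1 + t ^ 2) * ‖φ t‖ ≤ c) : Integrable φ :=
  (integrable_inv_one_add_sq.const_mul c).mono' hφ <| .of_forall fun t => by
    rw [← div_eq_mul_inv, le_div_iff₀ (by positivity), mul_comm]; exact h t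

theorem integral_norm_le_of_one_add_sq_mul_norm_le {φ : ℝ → E} {c : ℝ}
    (h : ∀ t, (1 + t ^ 2) * ‖φ t‖ ≤ c) : ∫ t, ‖φ t‖ ≤ π * c := by
  calc ∫ t, ‖φ t‖ ≤ ∫ t, c * (1 + t ^ 2)⁻¹ :=
        integral_mono_of_nonneg (.of_forall fun t => norm_nonneg _)
          (integrable_inv_one_add_sq.const_mul c) <| .of_forall fun t => by
            dsimp only
            rw [← div_eq_mul_inv, le_div_iff₀ (by positivity), mul_comm]; exact h t
    _ = π * c := by rw [integral_const_mul, integral_univ_inv_one_add_sq, mul_comm]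

end Integrals

section Fourier

variable {E : Type*} [NormedAddCommGroup E] [NormedSpace ℂ E]

theorem norm_fourier_le_integral_norm (f : ℝ → E) (ω : ℝ) : ‖𝓕 f ω‖ ≤ ∫ t, ‖f t‖ :=
  VectorFourier.norm_fourierIntegral_le_integral_norm _ _ _ _ _

theorem two_pi_mul_abs_pow_mul_norm_fourier_le {f : ℝ → E} {n : ℕ} (hf : ContDiff ℝ n f)
    (hint : ∀ i ≤ n, Integrable (iteratedDeriv i f)) (ω : ℝ) :
    (2 * π * |ω|) ^ n * ‖𝓕 f ω‖ ≤ ∫ t, ‖iteratedDeriv n f t‖ := by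
  have hfourier := Real.fourier_iteratedDeriv (N := n) hf
    (fun i hi => hint i (by exact_mod_cast hi)) le_rfl
  calc (2 * π * |ω|) ^ n * ‖𝓕 f ω‖ = ‖𝓕 (iteratedDeriv n f) ω‖ := by
        rw [hfourier, norm_smul, norm_pow]
        simp [abs_of_pos pi_pos]
    _ ≤ _ := norm_fourier_le_integral_norm _ _

theorem one_add_abs_pow_mul_norm_fourier_le {f : ℝ → E} {n : ℕ} (hf : ContDiff ℝ n f)
    (hint : ∀ i ≤ n, Integrable (iteratedDeriv i f)) (ω : ℝ) :
    (1 + |ω|) ^ n * ‖𝓕 f ω‖ ≤ 2 ^ n * ((∫ t, ‖f t‖) + ∫ t, ‖iteratedDeriv n f t‖) := by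
  have hpow : (1 + |ω|) ^ n ≤ 2 ^ n * (1 + |ω| ^ n) := by
    calc (1 + |ω|) ^ n ≤ 2 ^ (n - 1) * (1 ^ n + |ω| ^ n) := add_pow_le zero_le_one (abs_nonneg ω) n
      _ ≤ 2 ^ n * (1 + |ω| ^ n) := by
        rw [one_pow]; gcongr
        · norm_num
        · omega
  have hω : |ω| ^ n ≤ (2 * π * |ω|) ^ n := by
    gcongr; nlinarith [pi_gt_three, abs_nonneg ω]
  calc (1 + |ω|) ^ n * ‖𝓕 f ω‖ ≤ 2 ^ n * (1 + |ω| ^ n) * ‖𝓕 f ω‖ := by gcongr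
    _ = 2 ^ n * (‖𝓕 f ω‖ + |ω| ^ n * ‖𝓕 f ω‖) := by ring
    _ ≤ _ := by
        gcongr
        · exact norm_fourier_le_integral_norm f ω
        · grw [hω]; exact two_pi_mul_abs_pow_mul_norm_fourier_le hf hint ω

end Fourier

def mulConjTranslate (f g : ℝ → ℂ) (x : ℝ) : ℝ → ℂ := fun t => f t * conj (g (t - x))

theorem L2inner_tfShift_eq_fourier (f g : ℝ → ℂ) (x ω : ℝ) :
    L2inner f (tfShift x ω g) = 𝓕 (mulConjTranslate f g x) ω := by
  rw [Real.fourier_real_eq_integral_exp_smul]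
  refine integral_congr_ae (.of_forall fun t => ?_)
  simp only [tfShift, mulConjTranslate, map_mul, ← exp_conj, smul_eq_mul]
  push_cast
  simp only [conj_ofReal, conj_I, map_ofNat]
  ring_nf

theorem contDiff_mulConjTranslate {f g : ℝ → ℂ} {n : WithTop ℕ∞} (hf : ContDiff ℝ n f)
    (hg : ContDiff ℝ n g) (x : ℝ) : ContDiff ℝ n (mulConjTranslate f g x) :=
  hf.mul (hg.conj_comp_sub x)

namespace SchwartzMap

theorem exists_one_add_sq_mul_norm_iteratedFDeriv_mulConjTranslate_le (f g : 𝓢(ℝ, ℂ))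
    (M n : ℕ) : ∃ C, ∀ x t,
      (1 + t ^ 2) * ‖iteratedFDeriv ℝ n (mulConjTranslate f g x) t‖ ≤ C / (1 + |x|) ^ M := by
  refine ⟨2 ^ n *
    ((2 ^ (M + 2) * (Finset.Iic (M + 2, n)).sup (fun m => SchwartzMap.seminorm ℝ m.1 m.2) f) *
      (2 ^ M * (Finset.Iic (M, n)).sup (fun m => SchwartzMap.seminorm ℝ m.1 m.2) g)),
    fun x t => ?_⟩
  -- Peetre's inequality moves the decay in `x` onto `t` and `t - x`; the two spare powers of
  -- `1 + |t|` make the bound integrable in `t`.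
  have hweight : (1 + t ^ 2) * (1 + |x|) ^ M ≤ (1 + |t|) ^ (M + 2) * (1 + |t - x|) ^ M := by
    calc (1 + t ^ 2) * (1 + |x|) ^ M ≤ (1 + |t|) ^ 2 * ((1 + |t|) * (1 + |t - x|)) ^ M := by
          gcongr
          · exact one_add_sq_le_one_add_abs_sq t
          · exact one_add_abs_le_mul_one_add_abs_sub x t
      _ = (1 + |t|) ^ (M + 2) * (1 + |t - x|) ^ M := by rw [mul_pow]; ring
  rw [le_div_iff₀ (by positivity)]
  calc (1 + t ^ 2) * ‖iteratedFDeriv ℝ n (mulConjTranslate f g x) t‖ * (1 + |x|) ^ M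
      ≤ (1 + |t|) ^ (M + 2) * (1 + |t - x|) ^ M *
          ‖iteratedFDeriv ℝ n (mulConjTranslate f g x) t‖ := by
        rw [mul_right_comm]; gcongr
    _ ≤ _ := by
        refine mul_mul_norm_iteratedFDeriv_mul_le (f.smooth n) ((g.smooth n).conj_comp_sub x)
          (by positivity) (by positivity) (fun i hi => ?_) (fun i hi => ?_)
        · exact one_add_le_sup_seminorm_apply (m := (M + 2, n)) le_rfl hi f t
        · rw [norm_iteratedFDeriv_conj_comp_sub]
          exact one_add_le_sup_seminorm_apply (m := (M, n)) le_rfl hi g (t - x)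

theorem exists_weighted_norm_fourier_mulConjTranslate_le (f g : 𝓢(ℝ, ℂ)) (N : ℕ) :
    ∃ D, ∀ x ω, (1 + |x|) ^ N * (1 + |ω|) ^ N * ‖𝓕 (mulConjTranslate f g x) ω‖ ≤ D := by
  choose C hC using exists_one_add_sq_mul_norm_iteratedFDeriv_mulConjTranslate_le f g N
  refine ⟨2 ^ N * π * (C 0 + C N), fun x ω => ?_⟩
  have hsmooth := contDiff_mulConjTranslate (f.smooth N) (g.smooth N) x
  have hdecay (i : ℕ) (t : ℝ) : (1 + t ^ 2) * ‖iteratedDeriv i (mulConjTranslate f g x) t‖ ≤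
      C i / (1 + |x|) ^ N := by
    rw [← norm_iteratedFDeriv_eq_norm_iteratedDeriv]; exact hC i x t
  have hint (i : ℕ) (hi : i ≤ N) : Integrable (iteratedDeriv i (mulConjTranslate f g x)) :=
    integrable_of_one_add_sq_mul_norm_le
      (hsmooth.continuous_iteratedDeriv i (by exact_mod_cast hi)).aestronglyMeasurable (hdecay i)
  have hL1 (i : ℕ) := integral_norm_le_of_one_add_sq_mul_norm_le (hdecay i)
  have hL1₀ : ∫ t, ‖mulConjTranslate f g x t‖ ≤ π * (C 0 / (1 + |x|) ^ N) := by
    simpa only [iteratedDeriv_zero] using hL1 0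
  calc (1 + |x|) ^ N * (1 + |ω|) ^ N * ‖𝓕 (mulConjTranslate f g x) ω‖
      ≤ (1 + |x|) ^ N * (2 ^ N * (π * (C 0 / (1 + |x|) ^ N) + π * (C N / (1 + |x|) ^ N))) := by
        rw [mul_assoc]; gcongr (1 + |x|) ^ N * ?_
        grw [one_add_abs_pow_mul_norm_fourier_le hsmooth hint ω, hL1₀, hL1 N]
    _ = 2 ^ N * π * (C 0 + C N) := by field_simp

end SchwartzMap

/-- **Rapid decay of Gabor coefficients of Schwartz functions.** For Schwartz `f, g` and
every `N ∈ ℕ` there is `C > 0` with `|⟨f, π(θk,l)g⟩| ≤ C (1 + |k| + |l|)^{−N}` for all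
`k, l ∈ ℤ`. -/
theorem gabor_coefficients_rapid_decay (θ : ℝ) (hθ : 0 < θ) (f g : SchwartzMap ℝ ℂ) :
    ∀ N : ℕ, ∃ C : ℝ, 0 < C ∧ ∀ k l : ℤ,
      ‖L2inner (f : ℝ → ℂ) (tfShift (θ * k) l (g : ℝ → ℂ))‖ ≤
        C * ((1 + |(k : ℝ)| + |(l : ℝ)|) ^ N)⁻¹ := by
  intro N
  obtain ⟨D, hD⟩ := f.exists_weighted_norm_fourier_mulConjTranslate_le g N
  have hD₀ : 0 ≤ D := (by positivity : (0 : ℝ) ≤ _).trans (hD 0 0)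
  set c := max 1 θ⁻¹
  refine ⟨c ^ N * D + 1, by positivity, fun k l => ?_⟩
  rw [L2inner_tfShift_eq_fourier, ← div_eq_mul_inv, le_div_iff₀ (by positivity)]
  calc ‖𝓕 (mulConjTranslate f g (θ * k)) l‖ * (1 + |(k : ℝ)| + |(l : ℝ)|) ^ N
      ≤ ‖𝓕 (mulConjTranslate f g (θ * k)) l‖ * (c * ((1 + |θ * k|) * (1 + |(l : ℝ)|))) ^ N := by
        gcongr; exact one_add_abs_add_abs_le_max_mul θ hθ k l
    _ = c ^ N * ((1 + |θ * k|) ^ N * (1 + |(l : ℝ)|) ^ N *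
          ‖𝓕 (mulConjTranslate f g (θ * k)) l‖) := by rw [mul_pow, mul_pow]; ring
    _ ≤ c ^ N * D := by gcongr; exact hD _ _
    _ ≤ c ^ N * D + 1 := le_add_of_nonneg_right zero_le_one
end
end

section
/- Module action of rapidly decreasing coefficient sequences: Let θ > 0, let g ∈ 𝒮(ℝ), and let a : ℤ² → ℂ be rapidly decreasing, i.e. for every N ∈ ℕ the quantity sup_{k,l} (1+|k|+|l|)^N |a_{kl}| is finite. Then the series Σ_{k,l ∈ ℤ} a_{kl} (π(θk,l)g)(t) = Σ_{k,l ∈ ℤ} a_{kl} e^{2πilt} g(t − θk) converges absolutely for every t ∈ ℝ, and the resulting function belongs to 𝒮(ℝ). -/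
open MeasureTheory Complex

noncomputable section

/-- A double sequence `a : ℤ² → ℂ` is rapidly decreasing if for every `N` the quantity
`sup_{k,l} (1+|k|+|l|)^N |a_{kl}|` is finite. -/
def RapidlyDecreasing (a : ℤ × ℤ → ℂ) : Prop :=
  ∀ N : ℕ, ∃ C : ℝ, ∀ kl : ℤ × ℤ,
    (1 + |(kl.1 : ℝ)| + |(kl.2 : ℝ)|) ^ N * ‖a kl‖ ≤ C

open scoped ContDiff SchwartzMap

/-! Every term `a_{kl} π(θk, l) g` is smooth, and Leibniz' rule together with
`‖t‖ ≤ (1 + |x|)(1 + ‖t - x‖)` bounds its Schwartz seminorm of order `(m, n)` by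
`C_{m,n} (1 + |k| + |l|)^{m+n} |a_{kl}|`. Rapid decrease of `a` makes these bounds summable over
`ℤ²` for every `(m, n)`, so the series may be differentiated termwise to any order and its sum
inherits all Schwartz decay estimates. -/

section SummableSchwartz

variable {ι E F : Type*} [NormedAddCommGroup E] [NormedSpace ℝ E]
  [NormedAddCommGroup F] [NormedSpace ℝ F] [CompleteSpace F]

theorem SchwartzMap.exists_eq_tsum_of_summable_bounds (f : ι → E → F)
    (hf : ∀ i, ContDiff ℝ ∞ (f i)) (v : ℕ → ℕ → ι → ℝ) (hv : ∀ k n, Summable (v k n))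
    (hfv : ∀ k n i x, ‖x‖ ^ k * ‖iteratedFDeriv ℝ n (f i) x‖ ≤ v k n i) :
    ∃ G : 𝓢(E, F), ∀ x, G x = ∑' i, f i x := by
  have hv₀ : ∀ n : ℕ, (n : ℕ∞) ≤ (⊤ : ℕ∞) → Summable (v 0 n) := fun n _ => hv 0 n
  have hfv₀ : ∀ (n : ℕ) i x, (n : ℕ∞) ≤ (⊤ : ℕ∞) → ‖iteratedFDeriv ℝ n (f i) x‖ ≤ v 0 n i :=
    fun n i x _ => by simpa using hfv 0 n i x
  refine ⟨⟨fun x => ∑' i, f i x, contDiff_tsum hf hv₀ hfv₀, fun k n => ⟨∑' i, v k n i, ?_⟩⟩,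
    fun _ => rfl⟩
  intro x
  have hsum : Summable fun i => ‖iteratedFDeriv ℝ n (f i) x‖ :=
    (hv 0 n).of_nonneg_of_le (fun _ => norm_nonneg _) fun i => hfv₀ n i x le_top
  rw [iteratedFDeriv_tsum_apply hf hv₀ hfv₀ le_top x]
  calc ‖x‖ ^ k * ‖∑' i, iteratedFDeriv ℝ n (f i) x‖
      ≤ ‖x‖ ^ k * ∑' i, ‖iteratedFDeriv ℝ n (f i) x‖ := by
        gcongr; exact norm_tsum_le_tsum_norm hsum
    _ = ∑' i, ‖x‖ ^ k * ‖iteratedFDeriv ℝ n (f i) x‖ := hsum.tsum_mul_left _ |>.symm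
    _ ≤ ∑' i, v k n i := (hsum.mul_left _).tsum_le_tsum (hfv k n · x) (hv k n)

end SummableSchwartz

theorem summable_inv_one_add_abs_intCast_sq :
    Summable fun n : ℤ => ((1 + |(n : ℝ)|) ^ 2)⁻¹ := by
  refine (Real.summable_one_div_int_pow.mpr one_lt_two).of_norm_bounded_eventually ?_
  filter_upwards [Filter.eventually_cofinite_ne 0] with n hn
  have : (0 : ℝ) < |(n : ℝ)| := by positivity
  rw [norm_inv, norm_pow, Real.norm_of_nonneg (by positivity), one_div, ← sq_abs (n : ℝ)]
  gcongr
  linarith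

theorem RapidlyDecreasing.summable_pow_mul {a : ℤ × ℤ → ℂ} (ha : RapidlyDecreasing a) (N : ℕ) :
    Summable fun kl : ℤ × ℤ => (1 + |(kl.1 : ℝ)| + |(kl.2 : ℝ)|) ^ N * ‖a kl‖ := by
  obtain ⟨C, hC⟩ := ha (N + 4)
  have hweight := (summable_inv_one_add_abs_intCast_sq.mul_of_nonneg
    summable_inv_one_add_abs_intCast_sq (fun _ => by positivity) fun _ => by positivity).mul_left C
  refine hweight.of_nonneg_of_le (fun _ => by positivity) fun ⟨k, l⟩ => ?_
  set P := 1 + |(k : ℝ)| + |(l : ℝ)|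
  have hk : 0 ≤ |(k : ℝ)| := abs_nonneg _
  have hl : 0 ≤ |(l : ℝ)| := abs_nonneg _
  have hP : (1 + |(k : ℝ)|) ^ 2 * (1 + |(l : ℝ)|) ^ 2 ≤ P ^ 4 := by
    calc (1 + |(k : ℝ)|) ^ 2 * (1 + |(l : ℝ)|) ^ 2 ≤ P ^ 2 * P ^ 2 := by
          gcongr <;> simp only [P] <;> linarith
      _ = P ^ 4 := by ring
  rw [← mul_inv, ← div_eq_mul_inv, le_div_iff₀ (by positivity)]
  calc P ^ N * ‖a (k, l)‖ * ((1 + |(k : ℝ)|) ^ 2 * (1 + |(l : ℝ)|) ^ 2)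
      ≤ P ^ N * ‖a (k, l)‖ * P ^ 4 := by gcongr
    _ = P ^ (N + 4) * ‖a (k, l)‖ := by ring
    _ ≤ C := hC (k, l)

theorem contDiff_tfShift {n : WithTop ℕ∞} (x ξ : ℝ) {g : ℝ → ℂ} (hg : ContDiff ℝ n g) :
    ContDiff ℝ n (tfShift x ξ g) := by
  have hofReal : ContDiff ℝ n fun s : ℝ => (s : ℂ) := ofRealCLM.contDiff
  unfold tfShift
  fun_prop

theorem iteratedDeriv_cexp_mul_ofReal (c : ℂ) (n : ℕ) :
    iteratedDeriv n (fun t : ℝ => cexp (c * t)) = fun t : ℝ => c ^ n * cexp (c * t) := by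
  induction n with
  | zero => simp
  | succ n ih =>
    rw [iteratedDeriv_succ, ih]
    funext t
    have hlin : HasDerivAt (fun s : ℝ => c * (s : ℂ)) c t := by
      simpa using (Complex.ofRealCLM.hasDerivAt (x := t)).const_mul c
    rw [(hlin.cexp.const_mul (c ^ n)).deriv]
    ring

theorem norm_iteratedFDeriv_cexp_mul_ofReal (c : ℂ) (n : ℕ) (t : ℝ) :
    ‖iteratedFDeriv ℝ n (fun s : ℝ => cexp (c * s)) t‖ = ‖c‖ ^ n * ‖cexp (c * t)‖ := by
  rw [norm_iteratedFDeriv_eq_norm_iteratedDeriv, iteratedDeriv_cexp_mul_ofReal, norm_mul,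
    norm_pow]

theorem norm_iteratedFDeriv_tfShift_le {n : ℕ} {g : ℝ → ℂ} (hg : ContDiff ℝ n g) (x ξ t : ℝ) :
    ‖iteratedFDeriv ℝ n (tfShift x ξ g) t‖ ≤ ∑ i ∈ Finset.range (n + 1),
      (n.choose i : ℝ) * (2 * Real.pi * |ξ|) ^ i * ‖iteratedFDeriv ℝ (n - i) g (t - x)‖ := by
  set c : ℂ := 2 * Real.pi * I * ξ
  have hc : ‖c‖ = 2 * Real.pi * |ξ| := by
    simp [c, Complex.norm_real, Real.norm_eq_abs, abs_of_pos Real.pi_pos]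
  have hchar : ∀ s : ℝ, ‖cexp (c * s)‖ = 1 := fun s => by
    simp [c, Complex.norm_exp]
  have hexp : ContDiff ℝ n fun s : ℝ => cexp (c * s) :=
    contDiff_exp.comp (contDiff_const.mul ofRealCLM.contDiff)
  have hshift : ContDiff ℝ n fun s => g (s - x) := hg.comp (contDiff_id.sub contDiff_const)
  refine (norm_iteratedFDeriv_mul_le hexp hshift t le_rfl).trans_eq
    (Finset.sum_congr rfl fun i _ => ?_)
  rw [norm_iteratedFDeriv_cexp_mul_ofReal, hchar, hc, mul_one, iteratedFDeriv_comp_sub]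

theorem norm_le_one_add_norm_mul_one_add_norm_sub {E : Type*} [SeminormedAddCommGroup E]
    (x t : E) : ‖t‖ ≤ (1 + ‖x‖) * (1 + ‖t - x‖) := by
  have := norm_le_norm_sub_add t x
  nlinarith [norm_nonneg x, norm_nonneg (t - x), mul_nonneg (norm_nonneg x) (norm_nonneg (t - x))]

namespace SchwartzMap

variable {E F : Type*} [NormedAddCommGroup E] [NormedSpace ℝ E]
  [NormedAddCommGroup F] [NormedSpace ℝ F]

theorem norm_pow_mul_norm_iteratedFDeriv_sub_le (f : 𝓢(E, F)) {m n j : ℕ} (hj : j ≤ n)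
    (x t : E) : ‖t‖ ^ m * ‖iteratedFDeriv ℝ j f (t - x)‖ ≤
      (1 + ‖x‖) ^ m *
        (2 ^ m * (Finset.Iic (m, n)).sup (fun p => SchwartzMap.seminorm ℝ p.1 p.2) f) := by
  calc ‖t‖ ^ m * ‖iteratedFDeriv ℝ j f (t - x)‖
      ≤ ((1 + ‖x‖) * (1 + ‖t - x‖)) ^ m * ‖iteratedFDeriv ℝ j f (t - x)‖ := by
        gcongr; exact norm_le_one_add_norm_mul_one_add_norm_sub x t
    _ = (1 + ‖x‖) ^ m * ((1 + ‖t - x‖) ^ m * ‖iteratedFDeriv ℝ j f (t - x)‖) := by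
        rw [mul_pow, mul_assoc]
    _ ≤ _ := mul_le_mul_of_nonneg_left
        (one_add_le_sup_seminorm_apply (m := (m, n)) le_rfl hj f (t - x)) (by positivity)

theorem exists_norm_pow_mul_norm_iteratedFDeriv_tfShift_le (g : 𝓢(ℝ, ℂ)) (m n : ℕ) :
    ∃ C ≥ 0, ∀ x ξ t : ℝ, ‖t‖ ^ m * ‖iteratedFDeriv ℝ n (tfShift x ξ g) t‖ ≤
      C * ((1 + |x|) ^ m * (1 + |ξ|) ^ n) := by
  set S := 2 ^ m *
    (Finset.Iic (m, n)).sup (fun p => SchwartzMap.seminorm ℝ p.1 p.2 (E := ℝ) (F := ℂ)) g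
  refine ⟨(2 * Real.pi) ^ n * S, by positivity, fun x ξ t => ?_⟩
  set b := 2 * Real.pi * |ξ|
  have hb : b + 1 ≤ 2 * Real.pi * (1 + |ξ|) := by
    simp only [b]; nlinarith [Real.pi_gt_three]
  calc ‖t‖ ^ m * ‖iteratedFDeriv ℝ n (tfShift x ξ g) t‖
      ≤ ‖t‖ ^ m * ∑ i ∈ Finset.range (n + 1),
          (n.choose i : ℝ) * b ^ i * ‖iteratedFDeriv ℝ (n - i) g (t - x)‖ := by
        gcongr; exact norm_iteratedFDeriv_tfShift_le (g.smooth n) x ξ t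
    _ = ∑ i ∈ Finset.range (n + 1),
          (n.choose i : ℝ) * b ^ i * (‖t‖ ^ m * ‖iteratedFDeriv ℝ (n - i) g (t - x)‖) := by
        rw [Finset.mul_sum]; exact Finset.sum_congr rfl fun i _ => by ring
    _ ≤ ∑ i ∈ Finset.range (n + 1), (n.choose i : ℝ) * b ^ i * ((1 + |x|) ^ m * S) := by
        refine Finset.sum_le_sum fun i _ => mul_le_mul_of_nonneg_left ?_ (by positivity)
        simpa only [Real.norm_eq_abs] using
          norm_pow_mul_norm_iteratedFDeriv_sub_le g (Nat.sub_le n i) x t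
    _ = (b + 1) ^ n * ((1 + |x|) ^ m * S) := by
        rw [add_pow b 1 n, Finset.sum_mul]
        exact Finset.sum_congr rfl fun i _ => by ring
    _ ≤ (2 * Real.pi * (1 + |ξ|)) ^ n * ((1 + |x|) ^ m * S) := by gcongr
    _ = (2 * Real.pi) ^ n * S * ((1 + |x|) ^ m * (1 + |ξ|) ^ n) := by rw [mul_pow]; ring

end SchwartzMap

theorem exists_norm_pow_mul_norm_iteratedFDeriv_mul_tfShift_le (θ : ℝ) (g : 𝓢(ℝ, ℂ))
    (m n : ℕ) : ∃ C, ∀ (c : ℂ) (k l : ℤ) (t : ℝ),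
      ‖t‖ ^ m * ‖iteratedFDeriv ℝ n (fun s => c * tfShift (θ * k) l g s) t‖ ≤
        C * ((1 + |(k : ℝ)| + |(l : ℝ)|) ^ (m + n) * ‖c‖) := by
  obtain ⟨C, hC0, hC⟩ := g.exists_norm_pow_mul_norm_iteratedFDeriv_tfShift_le m n
  refine ⟨C * (1 + |θ|) ^ m, fun c k l t => ?_⟩
  set P := 1 + |(k : ℝ)| + |(l : ℝ)|
  have hθk : 1 + |θ * k| ≤ (1 + |θ|) * P := by
    rw [abs_mul]; simp only [P]
    nlinarith [abs_nonneg θ, abs_nonneg (k : ℝ), abs_nonneg (l : ℝ)]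
  have hl : 1 + |(l : ℝ)| ≤ P := by simp only [P]; linarith [abs_nonneg (k : ℝ)]
  have hsmul : (fun s => c * tfShift (θ * k) l g s) = c • tfShift (θ * k) l g := rfl
  rw [hsmul, iteratedFDeriv_const_smul_apply
    ((contDiff_tfShift _ _ (g.smooth n)).contDiffAt), norm_smul]
  calc ‖t‖ ^ m * (‖c‖ * ‖iteratedFDeriv ℝ n (tfShift (θ * k) l g) t‖)
      = ‖c‖ * (‖t‖ ^ m * ‖iteratedFDeriv ℝ n (tfShift (θ * k) l g) t‖) := by ring
    _ ≤ ‖c‖ * (C * ((1 + |θ * k|) ^ m * (1 + |(l : ℝ)|) ^ n)) :=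
        mul_le_mul_of_nonneg_left (hC _ _ t) (norm_nonneg c)
    _ ≤ ‖c‖ * (C * (((1 + |θ|) * P) ^ m * P ^ n)) := by gcongr
    _ = C * (1 + |θ|) ^ m * (P ^ (m + n) * ‖c‖) := by rw [mul_pow, pow_add]; ring

theorem module_action_schwartz_general (θ : ℝ) (g : SchwartzMap ℝ ℂ)
    (a : ℤ × ℤ → ℂ) (ha : RapidlyDecreasing a) :
    (∀ t : ℝ, Summable fun kl : ℤ × ℤ =>
        ‖a kl * tfShift (θ * kl.1) kl.2 (g : ℝ → ℂ) t‖) ∧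
    ∃ G : SchwartzMap ℝ ℂ, ∀ t : ℝ,
      (G : ℝ → ℂ) t = ∑' kl : ℤ × ℤ, a kl * tfShift (θ * kl.1) kl.2 (g : ℝ → ℂ) t := by
  choose C hC using exists_norm_pow_mul_norm_iteratedFDeriv_mul_tfShift_le θ g
  have hv : ∀ m n, Summable fun kl : ℤ × ℤ =>
      C m n * ((1 + |(kl.1 : ℝ)| + |(kl.2 : ℝ)|) ^ (m + n) * ‖a kl‖) :=
    fun m n => (ha.summable_pow_mul (m + n)).mul_left _
  refine ⟨fun t => (hv 0 0).of_nonneg_of_le (fun _ => norm_nonneg _) fun kl => ?_,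
    SchwartzMap.exists_eq_tsum_of_summable_bounds _ (fun kl => ?_) _ hv
      fun m n kl t => hC m n (a kl) kl.1 kl.2 t⟩
  · simpa using hC 0 0 (a kl) kl.1 kl.2 t
  · exact contDiff_const.mul (contDiff_tfShift _ _ g.smooth')

/-- **Module action of rapidly decreasing coefficient sequences.** For `g` Schwartz and `a`
rapidly decreasing on `ℤ²`, the series `Σ_{k,l} a_{kl} (π(θk,l)g)(t)` converges absolutely
for every `t`, and the resulting function is a Schwartz function. -/
theorem module_action_schwartz (θ : ℝ) (hθ : 0 < θ) (g : SchwartzMap ℝ ℂ)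
    (a : ℤ × ℤ → ℂ) (ha : RapidlyDecreasing a) :
    (∀ t : ℝ, Summable fun kl : ℤ × ℤ =>
        ‖a kl * tfShift (θ * kl.1) kl.2 (g : ℝ → ℂ) t‖) ∧
    ∃ G : SchwartzMap ℝ ℂ, ∀ t : ℝ,
      (G : ℝ → ℂ) t = ∑' kl : ℤ × ℤ, a kl * tfShift (θ * kl.1) kl.2 (g : ℝ → ℂ) t :=
  module_action_schwartz_general θ g a ha
end
end
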